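/- Let X be a standard normal random variable and g : ℝ → ℝ a differentiable function such that both E[X·g(X)] and E[g'(X)] exist (are integrable). Then E[X·g(X)] = E[g'(X)]. -/

import Mathlib

/-!
Gaussian integration by parts. The density `p` of `N(μ, v)` satisfies `v p' = -(x - μ) p`, so
`(p g)' = p g' - (x - μ) p g / v`. This derivative is Lebesgue integrable, and so is `p g`
itself, being dominated by `(x - μ) p g` away from `μ`; hence the integral of `(p g)'` over `ℝ`
vanishes.
-/

open MeasureTheory ProbabilityTheory Set
open scoped NNReal

lemma MeasureTheory.LocallyIntegrable.integrable_of_integrable_sub_smul {E : Type*}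
    [NormedAddCommGroup E] [NormedSpace ℝ E] {F : ℝ → E} {a : ℝ} (hF : LocallyIntegrable F)
    (h : Integrable (fun x => (x - a) • F x)) : Integrable F := by
  rw [← integrableOn_univ, ← union_compl_self (Icc (a - 1) (a + 1))]
  refine (hF.integrableOn_isCompact isCompact_Icc).union
    (Integrable.mono h.integrableOn hF.aestronglyMeasurable.restrict ?_)
  refine ae_restrict_of_forall_mem measurableSet_Icc.compl fun x hx => ?_
  have hxa : 1 ≤ |x - a| := by
    simp only [mem_compl_iff, mem_Icc, not_and_or, not_le] at hx
    rcases hx with hx | hx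
    · rw [abs_of_neg (by linarith)]; linarith
    · rw [abs_of_pos (by linarith)]; linarith
  rw [norm_smul, Real.norm_eq_abs]
  exact le_mul_of_one_le_left (norm_nonneg _) hxa

lemma ProbabilityTheory.hasDerivAt_gaussianPDFReal (μ : ℝ) (v : ℝ≥0) (x : ℝ) :
    HasDerivAt (gaussianPDFReal μ v) (-(x - μ) / v * gaussianPDFReal μ v x) x := by
  have hexponent : HasDerivAt (fun y => -(y - μ) ^ 2 / (2 * v)) (-(x - μ) / v) x :=
    (((hasDerivAt_id x).sub_const μ).pow 2).neg.div_const _ |>.congr_deriv (by norm_num; ring)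
  rw [gaussianPDFReal_def]
  exact (hexponent.exp.const_mul _).congr_deriv (by ring)

lemma ProbabilityTheory.integrable_gaussianReal_iff {E : Type*} [NormedAddCommGroup E]
    [NormedSpace ℝ E] {μ : ℝ} {v : ℝ≥0} {f : ℝ → E} (hv : v ≠ 0) :
    Integrable f (gaussianReal μ v) ↔ Integrable (fun x => gaussianPDFReal μ v x • f x) := by
  rw [gaussianReal_of_var_ne_zero μ hv, integrable_withDensity_iff_integrable_smul'
    (measurable_gaussianPDF μ v) (ae_of_all _ fun _ => gaussianPDF_lt_top)]
  simp only [toReal_gaussianPDF]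

theorem ProbabilityTheory.integral_sub_mul_gaussianReal {μ : ℝ} {v : ℝ≥0} (hv : v ≠ 0)
    {g : ℝ → ℝ} (hg : Differentiable ℝ g)
    (h1 : Integrable (fun x => (x - μ) * g x) (gaussianReal μ v))
    (h2 : Integrable (deriv g) (gaussianReal μ v)) :
    ∫ x, (x - μ) * g x ∂gaussianReal μ v = v * ∫ x, deriv g x ∂gaussianReal μ v := by
  rw [integrable_gaussianReal_iff hv] at h1 h2
  rw [integral_gaussianReal_eq_integral_smul hv, integral_gaussianReal_eq_integral_smul hv]
  simp only [smul_eq_mul] at h1 h2 ⊢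
  set p := gaussianPDFReal μ v
  have hderiv : ∀ x, HasDerivAt (fun y => p y * g y)
      (p x * deriv g x - p x * ((x - μ) * g x) / v) x := fun x =>
    ((hasDerivAt_gaussianPDFReal μ v x).mul (hg x).hasDerivAt).congr_deriv (by ring)
  have hint : Integrable (fun y => p y * g y) :=
    (continuous_iff_continuousAt.2 fun x => (hderiv x).continuousAt).locallyIntegrable
      |>.integrable_of_integrable_sub_smul (a := μ)
        (h1.congr (ae_of_all _ fun x => by simp only [smul_eq_mul]; ring))
  have hzero := integral_eq_zero_of_hasDerivAt_of_integrable hderiv (h2.sub (h1.div_const v)) hint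
  rw [integral_sub h2 (h1.div_const _), integral_div, sub_eq_zero,
    eq_div_iff (NNReal.coe_ne_zero.2 hv)] at hzero
  linarith

/-- Stein's lemma: for `X ~ N(0,1)` and differentiable `g` with `x * g x` and `g'`
integrable w.r.t. the Gaussian measure, `E[X g(X)] = E[g'(X)]`. -/
theorem stein_lemma (g : ℝ → ℝ) (hg : Differentiable ℝ g)
    (h1 : Integrable (fun x => x * g x) (gaussianReal 0 1))
    (h2 : Integrable (fun x => deriv g x) (gaussianReal 0 1)) :
    ∫ x, x * g x ∂(gaussianReal 0 1) = ∫ x, deriv g x ∂(gaussianReal 0 1) := by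
  simpa using integral_sub_mul_gaussianReal one_ne_zero hg (by simpa using h1) h2
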